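/- arXiv:2003.06649 — 5 statements merged into one kernel-verified Lean document; each statement's English description precedes it below -/
import Mathlib

section
/- For n even, the number of distinct solution sets of constraint networks on n variables over a domain D with |D| ≥ 3 using a single relation R ∈ {>, ≠} is at least 2^{(n/2)²}. -/
/-!
Index the assignments `φ_{ij}` by `k = (i, j)` and the candidate constraints by
`e k = R(X_i, X_{m+j})`. Then `φ_k` violates `e k` (both ends get `d₂`) and satisfies every
other `e k'` (its left end gets `d₁` or its right end gets `d₃`). Hence the network made of the
constraints `e k` with `k ∉ S` has exactly the `φ_k` with `k ∈ S` among its solutions, so `S`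
can be read off its solution set.
-/

section SolutionSet

variable {ι κ α : Type*}

def solutionSet (D : Finset α) (R : α → α → Prop) (C : Finset (ι × ι)) :
    Set (ι → α) :=
  {φ | (∀ i, φ i ∈ D) ∧ ∀ p ∈ C, R (φ p.1) (φ p.2)}

variable {D : Finset α} {R : α → α → Prop} {e : κ → ι × ι} {Φ : κ → ι → α}

theorem mem_solutionSet_image_compl_iff [Fintype κ] [DecidableEq κ] [DecidableEq ι]
    (hΦD : ∀ k i, Φ k i ∈ D)
    (hΦR : ∀ k k', R (Φ k (e k').1) (Φ k (e k').2) ↔ k' ≠ k)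
    (S : Finset κ) (k : κ) :
    Φ k ∈ solutionSet D R (Sᶜ.image e) ↔ k ∈ S := by
  simp only [solutionSet, Set.mem_ofPred_eq, Finset.forall_mem_image, Finset.mem_compl, hΦR,
    hΦD, implies_true, true_and]
  exact ⟨fun h => by_contra fun hk => h hk rfl,
    fun hk _ hk' => (ne_of_mem_of_not_mem hk hk').symm⟩

theorem two_pow_card_le_ncard_solutionSets [Finite ι] [Fintype κ]
    (hΦD : ∀ k i, Φ k i ∈ D)
    (hΦR : ∀ k k', R (Φ k (e k').1) (Φ k (e k').2) ↔ k' ≠ k) :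
    2 ^ Fintype.card κ ≤ {T | ∃ C : Finset (ι × ι), T = solutionSet D R C}.ncard := by
  classical
  let network (S : Finset κ) : Finset (ι × ι) := Sᶜ.image e
  have network_injective : Function.Injective (solutionSet D R ∘ network) := fun S S' h => by
    ext k
    rw [← mem_solutionSet_image_compl_iff hΦD hΦR S,
      ← mem_solutionSet_image_compl_iff hΦD hΦR S']
    exact Eq.to_iff (congrArg (Φ k ∈ ·) h)
  have solutionSets_finite : {T | ∃ C : Finset (ι × ι), T = solutionSet D R C}.Finite :=
    (Set.finite_range (solutionSet D R)).subset fun _ ⟨C, hC⟩ => ⟨C, hC.symm⟩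
  calc 2 ^ Fintype.card κ = (Set.range (solutionSet D R ∘ network)).ncard := by
        rw [← Set.image_univ, Set.ncard_image_of_injective _ network_injective, Set.ncard_univ,
          Nat.card_eq_fintype_card, Fintype.card_finset]
    _ ≤ _ := Set.ncard_le_ncard (by rintro _ ⟨S, rfl⟩; exact ⟨network S, rfl⟩)
          solutionSets_finite

end SolutionSet

theorem rel_ite_ite_iff {α : Type*} [Preorder α] {R : α → α → Prop}
    (hR_of_gt : ∀ x y, y < x → R x y) (hR_irrefl : ∀ x, ¬ R x x)
    {d1 d2 d3 : α} (h12 : d2 < d1) (h23 : d3 < d2) (p q : Prop) [Decidable p] [Decidable q] :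
    R (if p then d2 else d1) (if q then d2 else d3) ↔ ¬ (p ∧ q) := by
  by_cases hp : p <;> by_cases hq : q <;> simp only [hp, hq, if_true, if_false, and_self,
    and_false, false_and, not_true_eq_false, not_false_eq_true, iff_true, hR_irrefl]
  · exact hR_of_gt _ _ h23
  · exact hR_of_gt _ _ h12
  · exact hR_of_gt _ _ (h23.trans h12)

/-- For `n = 2m` variables and a domain `D` containing three values
`d₁ > d₂ > d₃`, using a single relation `R ∈ {>, ≠}`, the number of distinct
solution sets of constraint networks over `R` is at least `2^{(n/2)²} = 2^{m²}`. -/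
theorem card_solution_sets_ge_two_pow_sq
    (m : ℕ) (D : Finset ℤ) (d1 d2 d3 : ℤ)
    (hd1 : d1 ∈ D) (hd2 : d2 ∈ D) (hd3 : d3 ∈ D)
    (h12 : d1 > d2) (h23 : d2 > d3)
    (R : ℤ → ℤ → Prop) (hR : R = (· > ·) ∨ R = (· ≠ ·)) :
    2 ^ (m * m) ≤
      Set.ncard {T : Set (Fin (2 * m) → ℤ) |
        ∃ C : Finset (Fin (2 * m) × Fin (2 * m)),
          T = {φ | (∀ i, φ i ∈ D) ∧ ∀ p ∈ C, R (φ p.1) (φ p.2)}} := by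
  have hR_of_gt : ∀ x y : ℤ, y < x → R x y := by
    rcases hR with rfl | rfl
    exacts [fun _ _ h => h, fun _ _ h => h.ne']
  have hR_irrefl : ∀ x, ¬ R x x := by
    rcases hR with rfl | rfl
    exacts [lt_irrefl, fun _ h => h rfl]
  let σ : Fin m ⊕ Fin m ≃ Fin (2 * m) := finSumFinEquiv.trans (finCongr (two_mul m).symm)
  let e (k : Fin m × Fin m) : Fin (2 * m) × Fin (2 * m) := (σ (.inl k.1), σ (.inr k.2))
  let Φ (k : Fin m × Fin m) : Fin (2 * m) → ℤ :=
    Sum.elim (fun a => if a = k.1 then d2 else d1) (fun b => if b = k.2 then d2 else d3) ∘ σ.symm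
  have hΦD : ∀ k i, Φ k i ∈ D := fun k i => by
    simp only [Φ, Function.comp_apply]
    rcases σ.symm i with a | b <;> simp only [Sum.elim_inl, Sum.elim_inr] <;> split_ifs <;>
      assumption
  have hΦR : ∀ k k', R (Φ k (e k').1) (Φ k (e k').2) ↔ k' ≠ k := fun k k' => by
    simp only [Φ, e, Function.comp_apply, Equiv.symm_apply_apply, Sum.elim_inl, Sum.elim_inr,
      rel_ite_ite_iff hR_of_gt hR_irrefl h12 h23, ne_eq, Prod.ext_iff]
  calc 2 ^ (m * m) = 2 ^ Fintype.card (Fin m × Fin m) := by simp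
    _ ≤ _ := two_pow_card_le_ncard_solutionSets hΦD hΦR
end

section
/- Let L be a satisfiable Boolean constraint network over {=, ≠, >} on variables X, and let B' be a set of binary constraints over {=, ≠, >} none of which is entailed by L. Then there exists an assignment satisfying L that violates at least half of the constraints in B'. -/
/-!
Fix a solution `e₀` of `L`. Call a connected component of the constraint graph of `L` free if
no `>` constraint of `L` touches it. Flipping `e₀` on any set of free components gives another
solution, and on the other components every solution agrees with `e₀`. Average over all sets `T`
of free components met by `B'`. A constraint of `B'` whose truth value is the same for all solutions
is violated for every `T`, because it is not entailed. Any other constraint has an endpoint in a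
free component `q` such that toggling `q ∈ T` turns it from satisfied into violated (for `>`,
flipping either endpoint suffices; for `=` and `≠` the endpoints lie in different components).
So each constraint is violated for at least half of the `T`, and some `T` violates at least half
of `B'`.
-/

/-- Kinds of binary constraints over the language `{=, ≠, >}`. -/
inductive CKind : Type
  | ceq : CKind
  | cne : CKind
  | cgt : CKind

/-- Satisfaction of a binary constraint over the Boolean domain `{0,1}`
(`true` plays the role of `1`). -/
def holdsC {X : Type} (e : X → Bool) : CKind × X × X → Prop
  | (CKind.ceq, i, j) => e i = e j
  | (CKind.cne, i, j) => e i ≠ e j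
  | (CKind.cgt, i, j) => e i = true ∧ e j = false

open scoped Classical

open scoped symmDiff Finset

namespace Finset

variable {α β : Type*}

theorem exists_card_le_mul_card_filter {Ω : Finset α} (hΩ : Ω.Nonempty) (B : Finset β)
    (P : α → β → Prop) [∀ a b, Decidable (P a b)] (m : ℕ)
    (h : ∀ b ∈ B, #Ω ≤ m * #{a ∈ Ω | P a b}) :
    ∃ a ∈ Ω, #B ≤ m * #{b ∈ B | P a b} := by
  apply exists_le_of_sum_le hΩ
  calc ∑ _a ∈ Ω, #B = ∑ _b ∈ B, #Ω := by simp only [sum_const, smul_eq_mul, mul_comm]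
    _ ≤ ∑ b ∈ B, m * #{a ∈ Ω | P a b} := sum_le_sum h
    _ = ∑ a ∈ Ω, m * #{b ∈ B | P a b} := by
      rw [← mul_sum, ← mul_sum]
      exact congrArg _ (sum_card_bipartiteAbove_eq_sum_card_bipartiteBelow P).symm

theorem card_le_two_mul_card_filter_not {s : Finset α} (P : α → Prop) [DecidablePred P]
    (f : α → α) (hf : Set.MapsTo f s s) (hinj : Set.InjOn f s)
    (h : ∀ a ∈ s, P a → ¬ P (f a)) : #s ≤ 2 * #{a ∈ s | ¬ P a} := by
  have hle : #{a ∈ s | P a} ≤ #{a ∈ s | ¬ P a} := by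
    refine card_le_card_of_injOn f (fun a ha => ?_) (hinj.mono fun a ha => (mem_filter.1 ha).1)
    obtain ⟨has, hPa⟩ := mem_filter.1 ha
    exact mem_filter.2 ⟨hf has, h a has hPa⟩
  have := card_filter_add_card_filter_not (s := s) (fun a => P a)
  omega

end Finset

namespace BoolConstraint

variable {X : Type}

theorem holdsC_congr {e e' : X → Bool} {k : CKind} {i j : X} (hi : e i = e' i)
    (hj : e j = e' j) :
    holdsC e (k, i, j) ↔ holdsC e' (k, i, j) := by
  cases k <;> simp only [holdsC, hi, hj]

theorem xor_eq_of_holdsC {e e' : X → Bool} {k : CKind} {i j : X}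
    (h : holdsC e (k, i, j)) (h' : holdsC e' (k, i, j)) :
    (e i ^^ e' i) = (e j ^^ e' j) := by
  cases k <;> simp only [holdsC] at h h' <;> revert h h' <;>
    cases e i <;> cases e j <;> cases e' i <;> cases e' j <;> decide

theorem holdsC_of_xor_eq {e e' : X → Bool} {k : CKind} {i j : X} (hk : k ≠ CKind.cgt)
    (h : holdsC e (k, i, j)) (hx : (e i ^^ e' i) = (e j ^^ e' j)) : holdsC e' (k, i, j) := by
  cases k <;> simp only [holdsC, ne_eq, not_true_eq_false] at h hk ⊢ <;> revert h hx <;>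
    cases e i <;> cases e j <;> cases e' i <;> cases e' j <;> decide

theorem xor_eq_false_of_holdsC_gt {e e' : X → Bool} {i j : X}
    (h : holdsC e (CKind.cgt, i, j)) (h' : holdsC e' (CKind.cgt, i, j)) :
    (e i ^^ e' i) = false ∧ (e j ^^ e' j) = false := by
  obtain ⟨hi, hj⟩ := h
  obtain ⟨hi', hj'⟩ := h'
  simp [hi, hj, hi', hj']

variable (L : Finset (CKind × X × X))

def IsSolution (e : X → Bool) : Prop := ∀ c ∈ L, holdsC e c

def Linked (a b : X) : Prop := ∃ k, (k, a, b) ∈ L ∨ (k, b, a) ∈ L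

/-- Unlike the paper's `L_{=,≠}`, `>` constraints also link their endpoints here; this leaves
the free components unchanged, since a component touched by a `>` constraint is not free. -/
def componentSetoid : Setoid X := Relation.EqvGen.setoid (Linked L)

abbrev component (x : X) : Quotient (componentSetoid L) := Quotient.mk _ x

def IsFreeComponent (q : Quotient (componentSetoid L)) : Prop :=
  ∀ i j, (CKind.cgt, i, j) ∈ L → component L i ≠ q

noncomputable def flipComponents (e : X → Bool) (T : Finset (Quotient (componentSetoid L)))
    (x : X) : Bool :=
  e x ^^ decide (component L x ∈ T)

variable {L}

theorem component_eq_of_mem {k : CKind} {i j : X} (h : (k, i, j) ∈ L) :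
    component L i = component L j :=
  Quotient.sound (Relation.EqvGen.rel _ _ ⟨k, Or.inl h⟩)

theorem flipComponents_symmDiff_singleton (e : X → Bool)
    (T : Finset (Quotient (componentSetoid L))) (q : Quotient (componentSetoid L)) (x : X) :
    flipComponents L e (T ∆ {q}) x = (flipComponents L e T x ^^ decide (component L x = q)) := by
  unfold flipComponents
  by_cases hT : component L x ∈ T <;> by_cases hq : component L x = q <;>
    simp [Finset.mem_symmDiff, hT, hq]

namespace IsSolution

variable {e e' : X → Bool}

theorem xor_eq_of_component_eq (he : IsSolution L e) (he' : IsSolution L e') {x y : X}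
    (h : component L x = component L y) : (e x ^^ e' x) = (e y ^^ e' y) := by
  have hr := Quotient.exact h
  clear h
  induction hr with
  | rel a b hab =>
    obtain ⟨k, hab | hba⟩ := hab
    · exact xor_eq_of_holdsC (he _ hab) (he' _ hab)
    · exact (xor_eq_of_holdsC (he _ hba) (he' _ hba)).symm
  | refl => rfl
  | symm _ _ _ ih => exact ih.symm
  | trans _ _ _ _ _ ih₁ ih₂ => exact ih₁.trans ih₂

theorem eq_of_not_isFreeComponent (he : IsSolution L e) (he' : IsSolution L e') {x : X}
    (hx : ¬ IsFreeComponent L (component L x)) : e x = e' x := by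
  simp only [IsFreeComponent, not_forall, not_not] at hx
  obtain ⟨i, j, hij, hix⟩ := hx
  have hi : (e i ^^ e' i) = false := (xor_eq_false_of_holdsC_gt (he _ hij) (he' _ hij)).1
  rw [xor_eq_of_component_eq he he' hix] at hi
  simpa using hi

theorem flipComponents (he : IsSolution L e) {T : Finset (Quotient (componentSetoid L))}
    (hT : ∀ q ∈ T, IsFreeComponent L q) : IsSolution L (flipComponents L e T) := by
  rintro ⟨k, i, j⟩ hc
  have hij := component_eq_of_mem hc
  by_cases hi : component L i ∈ T
  · have hk : k ≠ CKind.cgt := by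
      rintro rfl
      exact hT _ hi i j hc rfl
    refine holdsC_of_xor_eq hk (he _ hc) ?_
    simp [BoolConstraint.flipComponents, hi, ← hij]
  · refine (holdsC_congr ?_ ?_).1 (he _ hc) <;>
      simp [BoolConstraint.flipComponents, hi, ← hij]

end IsSolution

theorem not_holdsC_flipComponents_symmDiff {e : X → Bool}
    {T : Finset (Quotient (componentSetoid L))} {q : Quotient (componentSetoid L)}
    {k : CKind} {i j : X}
    (hq : component L i = q ∨ component L j = q)
    (hk : k = CKind.cgt ∨ component L i ≠ component L j)
    (h : holdsC (flipComponents L e T) (k, i, j)) :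
    ¬ holdsC (flipComponents L e (T ∆ {q})) (k, i, j) := by
  intro h'
  rcases hk with rfl | hij
  · have hx := xor_eq_false_of_holdsC_gt h h'
    simp only [flipComponents_symmDiff_singleton, Bool.bne_self_left, decide_eq_false_iff_not]
      at hx
    tauto
  · have hx := xor_eq_of_holdsC h h'
    simp only [flipComponents_symmDiff_singleton, Bool.bne_self_left, decide_eq_decide] at hx
    rcases hq with rfl | rfl
    · exact hij (hx.1 rfl).symm
    · exact hij (hx.2 rfl)

theorem not_holdsC_of_determined {k : CKind} {i j : X}
    (hviol : ∃ e, IsSolution L e ∧ ¬ holdsC e (k, i, j))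
    (hdet : (k ≠ CKind.cgt ∧ component L i = component L j) ∨
      (¬ IsFreeComponent L (component L i) ∧ ¬ IsFreeComponent L (component L j)))
    {e : X → Bool} (he : IsSolution L e) : ¬ holdsC e (k, i, j) := by
  obtain ⟨e', he', hne'⟩ := hviol
  intro h
  rcases hdet with ⟨hk, hij⟩ | ⟨hi, hj⟩
  · exact hne' (holdsC_of_xor_eq hk h (he.xor_eq_of_component_eq he' hij))
  · exact hne' ((holdsC_congr (he.eq_of_not_isFreeComponent he' hi)
      (he.eq_of_not_isFreeComponent he' hj)).1 h)

theorem card_le_two_mul_card_violating_of_toggle {e₀ : X → Bool}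
    {S : Finset (Quotient (componentSetoid L))} {q : Quotient (componentSetoid L)} (hqS : q ∈ S)
    {k : CKind} {i j : X} (hq : component L i = q ∨ component L j = q)
    (hk : k = CKind.cgt ∨ component L i ≠ component L j) :
    #S.powerset ≤ 2 * #{T ∈ S.powerset | ¬ holdsC (flipComponents L e₀ T) (k, i, j)} := by
  refine Finset.card_le_two_mul_card_filter_not _ (· ∆ {q}) (fun T hT => ?_)
    (symmDiff_left_injective _).injOn (fun T _ => not_holdsC_flipComponents_symmDiff hq hk)
  simp only [Finset.coe_powerset, Set.mem_preimage, Set.mem_powerset_iff, Finset.coe_subset]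
    at hT ⊢
  exact symmDiff_le_sup.trans (sup_le hT (Finset.singleton_subset_iff.2 hqS))

theorem card_le_two_mul_card_violating {e₀ : X → Bool} (h₀ : IsSolution L e₀)
    {S : Finset (Quotient (componentSetoid L))} (hS : ∀ q ∈ S, IsFreeComponent L q)
    {k : CKind} {i j : X} (hviol : ∃ e, IsSolution L e ∧ ¬ holdsC e (k, i, j))
    (hi : IsFreeComponent L (component L i) → component L i ∈ S)
    (hj : IsFreeComponent L (component L j) → component L j ∈ S) :
    #S.powerset ≤ 2 * #{T ∈ S.powerset | ¬ holdsC (flipComponents L e₀ T) (k, i, j)} := by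
  by_cases hdet : (k ≠ CKind.cgt ∧ component L i = component L j) ∨
      (¬ IsFreeComponent L (component L i) ∧ ¬ IsFreeComponent L (component L j))
  · refine Finset.card_le_two_mul_card_filter_not _ id (fun T hT => hT) (Set.injOn_id _)
      (fun T hT _ => not_holdsC_of_determined hviol hdet ?_)
    exact h₀.flipComponents fun q hq => hS q (Finset.mem_powerset.1 hT hq)
  · push Not at hdet
    obtain ⟨hsplit, hfree⟩ := hdet
    have hk : k = CKind.cgt ∨ component L i ≠ component L j := by tauto
    by_cases hfi : IsFreeComponent L (component L i)
    · exact card_le_two_mul_card_violating_of_toggle (hi hfi) (Or.inl rfl) hk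
    · exact card_le_two_mul_card_violating_of_toggle (hj (hfree hfi)) (Or.inr rfl) hk

end BoolConstraint

open BoolConstraint

/-- If `L` is a satisfiable Boolean constraint network over
`{=, ≠, >}` and `B'` is a set of binary constraints over `{=, ≠, >}` none of
which is entailed by `L`, then some assignment satisfying `L` violates at least
half of the constraints in `B'`. -/
theorem exists_solution_violating_half
    (X : Type) (L B' : Finset (CKind × X × X))
    (hsat : ∃ e : X → Bool, ∀ c ∈ L, holdsC e c)
    (hB : ∀ c ∈ B', ¬ (∀ e : X → Bool, (∀ c' ∈ L, holdsC e c') → holdsC e c)) :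
    ∃ e : X → Bool, (∀ c ∈ L, holdsC e c) ∧
      (B'.card : ℝ) / 2 ≤ ((B'.filter (fun c => ¬ holdsC e c)).card : ℝ) := by
  obtain ⟨e₀, h₀⟩ : ∃ e, IsSolution L e := hsat
  set S := {q ∈ B'.biUnion (fun c => {component L c.2.1, component L c.2.2}) |
    IsFreeComponent L q}
  have hS : ∀ q ∈ S, IsFreeComponent L q := fun q hq => (Finset.mem_filter.1 hq).2
  have key : ∀ c ∈ B', #S.powerset ≤
      2 * #{T ∈ S.powerset | ¬ holdsC (flipComponents L e₀ T) c} := by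
    rintro ⟨k, i, j⟩ hc
    have hviol : ∃ e, IsSolution L e ∧ ¬ holdsC e (k, i, j) := by
      simpa [IsSolution] using hB _ hc
    refine card_le_two_mul_card_violating h₀ hS hviol (fun hf => ?_) (fun hf => ?_) <;>
      exact Finset.mem_filter.2 ⟨Finset.mem_biUnion.2 ⟨_, hc, by simp⟩, hf⟩
  obtain ⟨T, hT, hcard⟩ := Finset.exists_card_le_mul_card_filter (Finset.powerset_nonempty S) B'
    (fun T c => ¬ holdsC (flipComponents L e₀ T) c) 2 key
  refine ⟨_, h₀.flipComponents fun q hq => hS q (Finset.mem_powerset.1 hT hq), ?_⟩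
  rw [div_le_iff₀ two_pos]
  exact_mod_cast (mul_comm _ _).trans_ge hcard
end

section
/- Over the Boolean domain {0,1}, the specialized algorithm structure for learning networks over {>} uses at most 2n + k + 1 queries, where n is the number of variables and k ≤ n: each variable is processed with at most 2 queries in each of two phases over disjoint variable subsets, plus one final verification query; hence networks over {>} on Boolean domains are learnable with O(n) partial queries. -/
/-- The answer of the user for target network `T` over `{>}` on Boolean domain
to a partial query `q` (a partial assignment): `true` (yes) iff the assignment
violates no constraint of `T`, where `X_i > X_j` means `X_i = 1 ∧ X_j = 0`. -/
def answerQ (n : ℕ) (T : Finset (Fin n × Fin n)) (q : Fin n → Option Bool) : Bool :=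
  decide (∀ p ∈ T, ∀ a ∈ q p.1, ∀ b ∈ q p.2, a = true ∧ b = false)

/-- The history of answers after `k` queries when the deterministic algorithm
`A` (mapping an answer history to the next partial query) interacts with the
user for target network `T`. -/
def runHist (n : ℕ) (A : List Bool → (Fin n → Option Bool))
    (T : Finset (Fin n × Fin n)) : ℕ → List Bool
  | 0 => []
  | k + 1 => runHist n A T k ++ [answerQ n T (A (runHist n A T k))]

/-!
The learner asks four rounds of `n` queries. Round one builds greedily a maximal set `S` of
variables spanning no constraint: variable `k` is set to 1 together with the members of `S`
found so far, and joins `S` iff the answer is yes. By maximality every variable outside `S` is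
constrained with a member of `S`, so it is a left or a right variable, and setting it to 0
against `S` set to 1 is rejected exactly when it is a left one (round two). In rounds three and
four each member `v` of `S` is set to 0, resp. 1, while every variable outside `S` carries the
value its side forces (left ↦ 1, right ↦ 0); as all neighbours of `v` lie outside `S`, the
query is rejected iff `v` is a left, resp. right, variable.
-/

theorem runHist_eq_map_range {n : ℕ} (A : List Bool → (Fin n → Option Bool))
    (T : Finset (Fin n × Fin n)) (k : ℕ) :
    runHist n A T k = (List.range k).map fun i => answerQ n T (A (runHist n A T i)) := by
  induction k with
  | zero => rfl
  | succ k ih => rw [runHist, List.range_succ, List.map_append, ← ih]; rfl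

theorem length_runHist {n : ℕ} (A : List Bool → (Fin n → Option Bool))
    (T : Finset (Fin n × Fin n)) (k : ℕ) : (runHist n A T k).length = k := by
  rw [runHist_eq_map_range]; simp

namespace GtLearner

variable {n : ℕ} {T : Finset (Fin n × Fin n)}

def ones (s : Fin n → Bool) : Fin n → Option Bool :=
  fun j => if s j then some true else none

def probe (σ : Fin n → Option Bool) (m : ℕ) (b : Bool) : Fin n → Option Bool :=
  fun j => if j.val = m then some b else σ j

theorem answerQ_ones (s : Fin n → Bool) :
    answerQ n T (ones s) = true ↔ ∀ p ∈ T, ¬ (s p.1 ∧ s p.2) := by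
  rw [answerQ, decide_eq_true_iff]
  refine forall₂_congr fun p _ => ?_
  simp only [ones]
  split_ifs <;> simp_all

theorem answerQ_probe {σ : Fin n → Option Bool} {v : Fin n} {b : Bool}
    (hσ : answerQ n T σ = true) (hσv : σ v = none) (hvv : (v, v) ∉ T) :
    answerQ n T (probe σ v b) = true ↔
      (∀ w, (v, w) ∈ T → ∀ c ∈ σ w, b = true ∧ c = false) ∧
      (∀ u, (u, v) ∈ T → ∀ c ∈ σ u, c = true ∧ b = false) := by
  rw [answerQ, decide_eq_true_iff] at hσ ⊢
  have ne_of_mem {x y : Fin n} (h : (x, y) ∈ T) : x = v → y ≠ v := by rintro rfl rfl; exact hvv h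
  constructor
  · refine fun H => ⟨fun w hw c hc => ?_, fun u hu c hc => ?_⟩
    · exact H _ hw b (by simp [probe]) c (by simpa [probe, Fin.val_ne_of_ne (ne_of_mem hw rfl)])
    · exact H _ hu c (by simpa [probe, Fin.val_ne_of_ne (ne_of_mem hu · rfl)]) b (by simp [probe])
  · rintro ⟨H₁, H₂⟩ ⟨x, y⟩ hp a ha c hc
    rcases eq_or_ne x v with rfl | hx
    · simp only [probe, if_neg (Fin.val_ne_of_ne (ne_of_mem hp rfl)), if_pos,
        Option.mem_some_iff] at ha hc
      exact ha ▸ H₁ y hp c hc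
    rcases eq_or_ne y v with rfl | hy
    · simp only [probe, if_neg (Fin.val_ne_of_ne hx), if_pos, Option.mem_some_iff] at ha hc
      exact hc ▸ H₂ x hp a ha
    simp only [probe, if_neg (Fin.val_ne_of_ne hx), if_neg (Fin.val_ne_of_ne hy)] at ha hc
    exact hσ _ hp a ha c hc

section Disjoint

variable (hT : Disjoint (T.image Prod.fst) (T.image Prod.snd))
include hT

theorem fst_notMem_image_snd {p : Fin n × Fin n} (hp : p ∈ T) : p.1 ∉ T.image Prod.snd :=
  Finset.disjoint_left.1 hT (Finset.mem_image_of_mem _ hp)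

theorem snd_notMem_image_fst {p : Fin n × Fin n} (hp : p ∈ T) : p.2 ∉ T.image Prod.fst :=
  Finset.disjoint_right.1 hT (Finset.mem_image_of_mem _ hp)

theorem fst_ne_snd {p : Fin n × Fin n} (hp : p ∈ T) : p.1 ≠ p.2 := fun h =>
  fst_notMem_image_snd hT hp (h ▸ Finset.mem_image_of_mem _ hp)

end Disjoint

/-- Outside `S`, the value forced by the side found in round two, where a rejection marks a
left variable. -/
def classified (h : List Bool) : Fin n → Option Bool :=
  fun j => if h.getD j false then none else some !(h.getD (n + j) true)

/-- The answer to the query of round `r ∈ {0, 1, 2, 3}` about variable `v` is entry `r * n + v`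
of the history; `h.getD j false` says whether `j ∈ S`, the default `false` covering the
variables not yet asked in round one. -/
def learner (n : ℕ) (h : List Bool) : Fin n → Option Bool :=
  let k := h.length
  if k < n then ones fun j => j.val = k || h.getD j false
  else if k < 2 * n then probe (ones fun j => h.getD j false) (k - n) false
  else if k < 3 * n then probe (classified h) (k - 2 * n) false
  else probe (classified h) (k - 3 * n) true

def output (n : ℕ) (h : List Bool) : Finset (Fin n) × Finset (Fin n) :=
  (Finset.univ.filter fun j => if h.getD j false then h.getD (2 * n + j) true = false
      else h.getD (n + j) true = false,
   Finset.univ.filter fun j => if h.getD j false then h.getD (3 * n + j) true = false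
      else h.getD (n + j) true = true)

variable (T) in
def answer (i : ℕ) : Bool := answerQ n T (learner n (runHist n (learner n) T i))

theorem getD_runHist (k j : ℕ) (d : Bool) :
    (runHist n (learner n) T k).getD j d = if j < k then answer T j else d := by
  rw [runHist_eq_map_range]
  split_ifs with h <;> simp [List.getD_eq_getElem?_getD, h, answer]

theorem answer_eq_true_iff_of_lt {k : ℕ} (hk : k < n) :
    answer T k = true ↔ ∀ p ∈ T, ¬ ((p.1.val = k ∨ p.1.val < k ∧ answer T p.1 = true) ∧
      (p.2.val = k ∨ p.2.val < k ∧ answer T p.2 = true)) := by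
  rw [answer, learner, length_runHist, if_pos hk]
  simp only [getD_runHist]
  rw [answerQ_ones]
  simp

variable (hT : Disjoint (T.image Prod.fst) (T.image Prod.snd))
include hT

theorem answer_independent {p : Fin n × Fin n} (hp : p ∈ T) :
    ¬ (answer T p.1 = true ∧ answer T p.2 = true) := by
  rintro ⟨h₁, h₂⟩
  rcases lt_or_gt_of_ne (Fin.val_ne_of_ne (fst_ne_snd hT hp)) with h | h
  · exact (answer_eq_true_iff_of_lt p.2.isLt).1 h₂ p hp ⟨.inr ⟨h, h₁⟩, .inl rfl⟩
  · exact (answer_eq_true_iff_of_lt p.1.isLt).1 h₁ p hp ⟨.inl rfl, .inr ⟨h, h₂⟩⟩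

theorem exists_adj_of_answer_eq_false {v : Fin n} (hv : answer T v = false) :
    ∃ s : Fin n, answer T s = true ∧ ((v, s) ∈ T ∨ (s, v) ∈ T) := by
  have := (answer_eq_true_iff_of_lt (T := T) v.isLt).not.1 (by simp [hv])
  push Not at this
  obtain ⟨⟨x, y⟩, hp, hx | ⟨-, ax⟩, hy | ⟨-, ay⟩⟩ := this
  · exact absurd (Fin.ext (hx.trans hy.symm)) (fst_ne_snd hT hp)
  · exact ⟨y, ay, .inl (Fin.ext hx ▸ hp)⟩
  · exact ⟨x, ax, .inr (Fin.ext hy ▸ hp)⟩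
  · exact absurd ⟨ax, ay⟩ (answer_independent hT hp)

theorem mem_image_snd_iff_of_answer_eq_false {v : Fin n} (hv : answer T v = false) :
    v ∈ T.image Prod.snd ↔ v ∉ T.image Prod.fst := by
  refine ⟨fun hR hL => Finset.disjoint_left.1 hT hL hR, fun hL => ?_⟩
  obtain ⟨s, -, h | h⟩ := exists_adj_of_answer_eq_false hT hv
  · exact absurd (Finset.mem_image_of_mem Prod.fst h) hL
  · exact Finset.mem_image_of_mem Prod.snd h

theorem answer_add_eq_false_iff {v : Fin n} (hv : answer T v = false) :
    answer T (n + v) = false ↔ v ∈ T.image Prod.fst := by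
  have hq : learner n (runHist n (learner n) T (n + v)) = probe (ones (answer T ·)) v false := by
    rw [learner, length_runHist, if_neg (by omega), if_pos (by omega), Nat.add_sub_cancel_left]
    congr; funext j; rw [getD_runHist, if_pos (by omega)]
  have hσ : answerQ n T (ones (answer T ·)) = true :=
    (answerQ_ones _).2 fun p hp => answer_independent hT hp
  rw [answer, hq, ← Bool.not_eq_true, answerQ_probe hσ (by simp [ones, hv])
    (fun h => fst_ne_snd hT h rfl)]
  have adj_iff : (∃ w, (v, w) ∈ T ∧ answer T w = true) ↔ v ∈ T.image Prod.fst := by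
    refine ⟨fun ⟨w, hw, _⟩ => Finset.mem_image_of_mem Prod.fst hw, fun hL => ?_⟩
    obtain ⟨s, hs, h | h⟩ := exists_adj_of_answer_eq_false hT hv
    · exact ⟨s, h, hs⟩
    · exact absurd hL (snd_notMem_image_fst hT h)
  simpa [ones] using adj_iff

omit hT in
variable (T) in
def sides (j : Fin n) : Option Bool :=
  if answer T j then none else some (decide (j ∈ T.image Prod.fst))

theorem classified_runHist {k : ℕ} (hk : 2 * n ≤ k) :
    classified (runHist n (learner n) T k) = sides T := by
  funext j
  have := j.isLt
  simp only [classified, sides, getD_runHist, if_pos (by omega : j.val < k),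
    if_pos (by omega : n + j.val < k)]
  cases hj : answer T j
  · cases h : answer T (n + j) <;> simp [← answer_add_eq_false_iff hT hj, h]
  · rfl

omit hT in
theorem sides_fst_eq {p : Fin n × Fin n} (hp : p ∈ T) : ∀ c ∈ sides T p.1, c = true := by
  simp [sides, Finset.mem_image_of_mem Prod.fst hp]

theorem sides_snd_eq {p : Fin n × Fin n} (hp : p ∈ T) : ∀ c ∈ sides T p.2, c = false := by
  simp [sides, snd_notMem_image_fst hT hp]

theorem answerQ_sides : answerQ n T (sides T) = true := by
  rw [answerQ, decide_eq_true_iff]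
  exact fun p hp a ha b hb => ⟨sides_fst_eq hp a ha, sides_snd_eq hT hp b hb⟩

theorem answer_two_mul_add_eq_false_iff {v : Fin n} (hv : answer T v = true) :
    answer T (2 * n + v) = false ↔ v ∈ T.image Prod.fst := by
  have hq : learner n (runHist n (learner n) T (2 * n + v)) = probe (sides T) v false := by
    rw [learner, length_runHist, if_neg (by omega), if_neg (by omega), if_pos (by omega),
      classified_runHist hT (by omega), Nat.add_sub_cancel_left]
  rw [answer, hq, ← Bool.not_eq_true, answerQ_probe (answerQ_sides hT) (by simp [sides, hv])
    (fun h => fst_ne_snd hT h rfl)]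
  constructor
  · refine fun h => by_contra fun hL =>
      h ⟨fun w hw => ?_, fun u hu c hc => ⟨sides_fst_eq hu c hc, rfl⟩⟩
    exact absurd (Finset.mem_image_of_mem Prod.fst hw) hL
  · rintro hL ⟨H, -⟩
    obtain ⟨⟨x, w⟩, hw, rfl⟩ := Finset.mem_image.1 hL
    have : sides T w = some false := by
      have := answer_independent hT hw
      simp_all [sides]
    exact absurd (H w hw false this).1 (by simp)

theorem answer_three_mul_add_eq_false_iff {v : Fin n} (hv : answer T v = true) :
    answer T (3 * n + v) = false ↔ v ∈ T.image Prod.snd := by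
  have hq : learner n (runHist n (learner n) T (3 * n + v)) = probe (sides T) v true := by
    rw [learner, length_runHist, if_neg (by omega), if_neg (by omega), if_neg (by omega),
      classified_runHist hT (by omega), Nat.add_sub_cancel_left]
  rw [answer, hq, ← Bool.not_eq_true, answerQ_probe (answerQ_sides hT) (by simp [sides, hv])
    (fun h => fst_ne_snd hT h rfl)]
  constructor
  · refine fun h => by_contra fun hR =>
      h ⟨fun w hw c hc => ⟨rfl, sides_snd_eq hT hw c hc⟩, fun u hu => ?_⟩
    exact absurd (Finset.mem_image_of_mem Prod.snd hu) hR
  · rintro hR ⟨-, H⟩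
    obtain ⟨⟨u, x⟩, hu, rfl⟩ := Finset.mem_image.1 hR
    have : sides T u = some true := by
      have := answer_independent hT hu
      simp_all [sides]
    exact absurd (H u hu true this).2 (by simp)

theorem output_runHist :
    output n (runHist n (learner n) T (4 * n + 1)) = (T.image Prod.fst, T.image Prod.snd) := by
  ext j
  all_goals
    have := j.isLt
    simp only [output, Finset.mem_filter, Finset.mem_univ, true_and, getD_runHist,
      if_pos (by omega : j.val < 4 * n + 1), if_pos (by omega : n + j.val < 4 * n + 1),
      if_pos (by omega : 2 * n + j.val < 4 * n + 1), if_pos (by omega : 3 * n + j.val < 4 * n + 1)]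
    cases hj : answer T j
  · simpa using answer_add_eq_false_iff hT hj
  · simpa using answer_two_mul_add_eq_false_iff hT hj
  · simp [mem_image_snd_iff_of_answer_eq_false hT hj, ← answer_add_eq_false_iff hT hj]
  · simpa using answer_three_mul_add_eq_false_iff hT hj

end GtLearner

/-- Networks over `{>}` on the Boolean domain are learnable with
`O(n)` partial queries: there is a deterministic algorithm asking at most
`4n + 1` partial queries that, for every satisfiable target network `T`
(i.e. `Left(T)` and `Right(T)` disjoint), correctly identifies the sets
`Left(T)` and `Right(T)`, which characterize `T` up to equivalence. -/
theorem gt_networks_learnable_linear_queries (n : ℕ) :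
    ∃ (A : List Bool → (Fin n → Option Bool))
      (Out : List Bool → Finset (Fin n) × Finset (Fin n)),
      ∀ T : Finset (Fin n × Fin n),
        Disjoint (T.image Prod.fst) (T.image Prod.snd) →
        Out (runHist n A T (4 * n + 1)) = (T.image Prod.fst, T.image Prod.snd) :=
  ⟨GtLearner.learner n, GtLearner.output n, fun _ hT => GtLearner.output_runHist hT⟩
end

section
/- Let Δ be a set of conjunctions of elementary constraints over a fixed scope. If a sequence of 'join' updates replaces Δ by {δ ∧ δ' : δ ∈ Δ, δ' ∈ K} whenever an example violates exactly the conjunctions in K ⊊ Δ (K ≠ ∅), and c* is a conjunction such that at every step some subset of c* lies in K, then after each update the union of the subsets of c* present in Δ still covers all elementary constraints of c*; moreover the maximum size of a subset of c* present in Δ strictly increases at each such update, so after at most |c*| updates c* itself belongs to Δ. -/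
/-- A valid join update: some example (abstracted as a violation predicate
`V` on elementary constraints) violates exactly the conjunctions in
`K = {s ∈ Δ | ∃ x ∈ s, V x}`, with `∅ ≠ K ⊊ Δ` and `K` containing at least one
subset of the target conjunction `cs`; then `Δ` is replaced by all pairwise
unions of a member of `Δ` with a member of `K`. -/
def validStep {α : Type} [DecidableEq α] (cs : Finset α)
    (Δ Δ' : Finset (Finset α)) : Prop :=
  ∃ V : α → Bool,
    (Δ.filter (fun s => ∃ x ∈ s, V x = true)).Nonempty ∧
    (Δ.filter (fun s => ∃ x ∈ s, V x = true)) ≠ Δ ∧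
    (∃ s ∈ Δ.filter (fun s => ∃ x ∈ s, V x = true), s ⊆ cs) ∧
    Δ' = (Δ ×ˢ Δ.filter (fun s => ∃ x ∈ s, V x = true)).image (fun p => p.1 ∪ p.2)

/-! The subsets of `c*` present in `Δ` keep covering `c*`, since `s ∪ t` stays inside `c*` for
each such `s` and any `t ∈ K` with `t ⊆ c*`. For growth, take a largest such `s ≠ c*`: if `t ⊄ s`,
then `s ∪ t` is larger; otherwise `s` contains a violated constraint of `t`, so `s ∈ K`, and joining
`s` with a covering subset not contained in it is larger. A size that rises by at least one per
update while below `|c*|` reaches `|c*|` within `|c*|` updates, and then it is attained by `c*`. -/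

open Finset FinsetFamily

theorem exists_le_le_of_lt_imp_lt_succ {f : ℕ → ℕ} {N : ℕ}
    (h : ∀ i, f i < N → f i < f (i + 1)) : ∃ k ≤ N, N ≤ f k := by
  by_contra! hlt
  have hgrow : ∀ k ≤ N, k ≤ f k := by
    intro k
    induction k with
    | zero => simp
    | succ k ih => intro hk; have := h k (hlt k (by omega)); omega
  exact absurd (hgrow N le_rfl) (hlt N le_rfl).not_ge

section JoinUpdate

variable {α : Type} [DecidableEq α] {C : Finset α} {Δ K : Finset (Finset α)}

theorem mem_of_card_le_sup_card (hne : (Δ.filter (· ⊆ C)).Nonempty)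
    (hle : C.card ≤ (Δ.filter (· ⊆ C)).sup card) : C ∈ Δ := by
  obtain ⟨s, hs, hsup⟩ := exists_mem_eq_sup _ hne card
  rw [mem_filter] at hs
  exact eq_of_subset_of_card_le hs.2 (hsup ▸ hle) ▸ hs.1

theorem sup_id_filter_subset_sups {t : Finset α} (ht : t ∈ K) (htC : t ⊆ C)
    (hcover : (Δ.filter (· ⊆ C)).sup id = C) :
    ((Δ ⊻ K).filter (· ⊆ C)).sup id = C := by
  refine le_antisymm (Finset.sup_le fun s hs => (mem_filter.1 hs).2) ?_
  conv_lhs => rw [← hcover]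
  refine Finset.sup_le fun s hs => ?_
  rw [mem_filter] at hs
  have hst : s ∪ t ∈ (Δ ⊻ K).filter (· ⊆ C) :=
    mem_filter.2 ⟨sup_mem_sups hs.1 ht, union_subset hs.2 htC⟩
  exact subset_union_left.trans (le_sup (f := id) hst)

theorem exists_ssubset_mem_sups {s t : Finset α}
    (hup : ∀ s ∈ Δ, ∀ t ∈ K, t ⊆ s → s ∈ K) (ht : t ∈ K) (htC : t ⊆ C)
    (hcover : (Δ.filter (· ⊆ C)).sup id = C) (hs : s ∈ Δ.filter (· ⊆ C)) (hsC : s ≠ C) :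
    ∃ u ∈ (Δ ⊻ K).filter (· ⊆ C), s ⊂ u := by
  rw [mem_filter] at hs
  by_cases hts : t ⊆ s
  · have hsK := hup s hs.1 t ht hts
    obtain ⟨s', hs', hs's⟩ : ∃ s' ∈ Δ.filter (· ⊆ C), ¬ s' ⊆ s := by
      by_contra! h
      exact hsC (hs.2.antisymm (hcover ▸ Finset.sup_le h))
    refine ⟨s' ∪ s, mem_filter.2 ⟨sup_mem_sups (mem_filter.1 hs').1 hsK,
      union_subset (mem_filter.1 hs').2 hs.2⟩, ?_⟩
    exact ssubset_of_subset_of_ne subset_union_right fun h => hs's (h ▸ subset_union_left)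
  · exact ⟨s ∪ t, mem_filter.2 ⟨sup_mem_sups hs.1 ht, union_subset hs.2 htC⟩,
      ssubset_of_subset_of_ne subset_union_left fun h => hts (h ▸ subset_union_right)⟩

theorem sup_card_lt_sup_card_sups {t : Finset α} (hKΔ : K ⊆ Δ)
    (hup : ∀ s ∈ Δ, ∀ t ∈ K, t ⊆ s → s ∈ K) (ht : t ∈ K) (htC : t ⊆ C)
    (hcover : (Δ.filter (· ⊆ C)).sup id = C) (hlt : (Δ.filter (· ⊆ C)).sup card < C.card) :
    (Δ.filter (· ⊆ C)).sup card < ((Δ ⊻ K).filter (· ⊆ C)).sup card := by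
  obtain ⟨s, hs, hsup⟩ :=
    exists_mem_eq_sup (Δ.filter (· ⊆ C)) ⟨t, mem_filter.2 ⟨hKΔ ht, htC⟩⟩ card
  obtain ⟨u, hu, hsu⟩ := exists_ssubset_mem_sups hup ht htC hcover hs (by rintro rfl; omega)
  calc (Δ.filter (· ⊆ C)).sup card = s.card := hsup
    _ < u.card := card_lt_card hsu
    _ ≤ _ := le_sup (f := card) hu

end JoinUpdate

namespace validStep

variable {α : Type} [DecidableEq α] {C : Finset α} {Δ Δ' : Finset (Finset α)}

theorem exists_sups (h : validStep C Δ Δ') :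
    ∃ K ⊆ Δ, (∀ s ∈ Δ, ∀ t ∈ K, t ⊆ s → s ∈ K) ∧ (∃ t ∈ K, t ⊆ C) ∧ Δ' = Δ ⊻ K := by
  obtain ⟨V, -, -, ht, rfl⟩ := h
  refine ⟨_, filter_subset _ Δ, fun s hs t ht hts => ?_, ht, rfl⟩
  obtain ⟨x, hxt, hx⟩ := (mem_filter.1 ht).2
  exact mem_filter.2 ⟨hs, x, hts hxt, hx⟩

theorem filter_subset_nonempty (h : validStep C Δ Δ') : (Δ.filter (· ⊆ C)).Nonempty := by
  obtain ⟨K, hKΔ, -, ⟨t, ht, htC⟩, -⟩ := h.exists_sups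
  exact ⟨t, mem_filter.2 ⟨hKΔ ht, htC⟩⟩

theorem sup_id_filter_subset (h : validStep C Δ Δ')
    (hcover : (Δ.filter (· ⊆ C)).sup id = C) : (Δ'.filter (· ⊆ C)).sup id = C := by
  obtain ⟨K, -, -, ⟨t, ht, htC⟩, rfl⟩ := h.exists_sups
  exact sup_id_filter_subset_sups ht htC hcover

theorem sup_card_lt (h : validStep C Δ Δ') (hcover : (Δ.filter (· ⊆ C)).sup id = C)
    (hlt : (Δ.filter (· ⊆ C)).sup card < C.card) :
    (Δ.filter (· ⊆ C)).sup card < (Δ'.filter (· ⊆ C)).sup card := by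
  obtain ⟨K, hKΔ, hup, ⟨t, ht, htC⟩, rfl⟩ := h.exists_sups
  exact sup_card_lt_sup_card_sups hKΔ hup ht htC hcover hlt

end validStep

theorem join_updates_reach_target_general
    {α : Type} [DecidableEq α] (cs : Finset α)
    (Δ Δ' : Finset (Finset α))
    (hinv : (Δ.filter (fun s => s ⊆ cs)).sup id = cs)
    (hstep : validStep cs Δ Δ') :
    ((Δ'.filter (fun s => s ⊆ cs)).sup id = cs) ∧
    ((Δ.filter (fun s => s ⊆ cs)).sup (fun s => s.card) < cs.card →
      (Δ.filter (fun s => s ⊆ cs)).sup (fun s => s.card) <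
        (Δ'.filter (fun s => s ⊆ cs)).sup (fun s => s.card)) ∧
    (∀ Δseq : ℕ → Finset (Finset α), Δseq 0 = Δ →
      (∀ i : ℕ, validStep cs (Δseq i) (Δseq (i + 1))) →
      ∃ k ≤ cs.card, cs ∈ Δseq k) := by
  refine ⟨hstep.sup_id_filter_subset hinv, hstep.sup_card_lt hinv, fun Δseq h0 hseq => ?_⟩
  have hcover : ∀ i, ((Δseq i).filter (· ⊆ cs)).sup id = cs := by
    intro i
    induction i with
    | zero => exact h0 ▸ hinv
    | succ i ih => exact (hseq i).sup_id_filter_subset ih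
  obtain ⟨k, hk, hle⟩ := exists_le_le_of_lt_imp_lt_succ fun i => (hseq i).sup_card_lt (hcover i)
  exact ⟨k, hk, mem_of_card_le_sup_card (hseq k).filter_subset_nonempty hle⟩

/-- Let `cs` (the target conjunction `c*`) be a nonempty set of
elementary constraints and `Δ` a set of nonempty conjunctions satisfying the
invariant that the subsets of `cs` present in `Δ` cover `cs`.  Then (1) any
valid join update preserves the invariant, (2) the maximum size of a subset of
`cs` present in `Δ` strictly increases at each update while it is `< |cs|`, and
(3) along any sequence of valid updates, `cs` itself belongs to `Δ` after at
most `|cs|` updates. -/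
theorem join_updates_reach_target
    {α : Type} [DecidableEq α] (cs : Finset α) (hcs : cs.Nonempty)
    (Δ Δ' : Finset (Finset α))
    (hne : ∀ s ∈ Δ, s.Nonempty)
    (hinv : (Δ.filter (fun s => s ⊆ cs)).sup id = cs)
    (hstep : validStep cs Δ Δ') :
    ((Δ'.filter (fun s => s ⊆ cs)).sup id = cs) ∧
    ((Δ.filter (fun s => s ⊆ cs)).sup (fun s => s.card) < cs.card →
      (Δ.filter (fun s => s ⊆ cs)).sup (fun s => s.card) <
        (Δ'.filter (fun s => s ⊆ cs)).sup (fun s => s.card)) ∧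
    (∀ Δseq : ℕ → Finset (Finset α), Δseq 0 = Δ →
      (∀ i : ℕ, validStep cs (Δseq i) (Δseq (i + 1))) →
      ∃ k ≤ cs.card, cs ∈ Δseq k) :=
  join_updates_reach_target_general cs Δ Δ' hinv hstep
end

section
/- In the join-based candidate elimination, once a conjunction is removed from Δ it can never reappear: if rem ∉ Δ after an update, then no subsequent update of the forms 'remove all conjunctions violating a positive example' or 'join all conjunctions with the violated ones' can produce rem again. -/
/-- One update of the candidate set `Δ` given an example (abstracted as a
violation predicate `V` on elementary constraints; a conjunction `s` is
violated iff some element of `s` is violated):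
* (positive) remove from `Δ` all violated conjunctions, or
* (negative, with a nonempty violated set `κ`) replace `Δ` by all pairwise
  unions of a member of `Δ` with a member of `κ`. -/
def stepRel {α : Type} [DecidableEq α] (Δ Δ' : Finset (Finset α)) : Prop :=
  ∃ V : α → Bool,
    (Δ' = Δ.filter (fun s => ¬ ∃ x ∈ s, V x = true)) ∨
    ((Δ.filter (fun s => ∃ x ∈ s, V x = true)).Nonempty ∧
      Δ' = (Δ ×ˢ Δ.filter (fun s => ∃ x ∈ s, V x = true)).image (fun p => p.1 ∪ p.2))

/-!
The invariant is that `rem` is not a nonempty union of members of `Δ`, i.e. `rem` lies outside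
the `supClosure` of `Δ`. A positive update shrinks `Δ` and a negative update replaces `Δ` by
unions of its members, so this closure never grows. When `rem` is removed it leaves the closure:
after a positive update no member of `Δ`, hence no union of members, contains the violated
constraint that `rem` contains; after a negative update a member `a ∪ k ⊆ rem` of the new `Δ`,
with `k` violated, would put `rem ∪ k = rem` back into `Δ`.
-/

section SemilatticeSup

variable {β : Type*} [SemilatticeSup β]

lemma supClosure_subset_upperClosure (s : Set β) : supClosure s ⊆ upperClosure s :=
  supClosure_min subset_upperClosure (upperClosure s).upper.supClosed

lemma exists_le_of_mem_supClosure {s : Set β} {a : β} (ha : a ∈ supClosure s) :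
    ∃ b ∈ s, b ≤ a :=
  mem_upperClosure.mp (supClosure_subset_upperClosure s ha)

variable [DecidableEq β]

lemma supClosure_image_sup_product_subset {s t : Finset β} (hts : t ⊆ s) :
    supClosure ↑((s ×ˢ t).image fun p => p.1 ⊔ p.2) ⊆ supClosure (s : Set β) := by
  refine supClosure_min ?_ supClosed_supClosure
  intro a ha
  obtain ⟨⟨b, c⟩, hbc, rfl⟩ := Finset.mem_image.mp ha
  obtain ⟨hb, hc⟩ := Finset.mem_product.mp hbc
  exact sup_mem_supClosure hb (hts hc)

lemma not_le_of_mem_image_sup_product {s t : Finset β} {a b : β} (ha : a ∈ s)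
    (ha' : a ∉ (s ×ˢ t).image fun p => p.1 ⊔ p.2)
    (hb : b ∈ (s ×ˢ t).image fun p => p.1 ⊔ p.2) : ¬ b ≤ a := by
  obtain ⟨⟨c, d⟩, hcd, rfl⟩ := Finset.mem_image.mp hb
  intro hle
  have hd : d ∈ t := (Finset.mem_product.mp hcd).2
  exact ha' (Finset.mem_image.mpr
    ⟨(a, d), Finset.mem_product.mpr ⟨ha, hd⟩, sup_eq_left.mpr (le_sup_right.trans hle)⟩)

end SemilatticeSup

lemma supClosed_setOf_not_violated {α : Type*} [DecidableEq α] (V : α → Bool) :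
    SupClosed {s : Finset α | ¬ ∃ x ∈ s, V x = true} := by
  rintro s hs t ht ⟨x, hx, hVx⟩
  rcases Finset.mem_union.mp hx with hx | hx
  exacts [hs ⟨x, hx, hVx⟩, ht ⟨x, hx, hVx⟩]

namespace stepRel

variable {α : Type} [DecidableEq α] {Δ Δ' : Finset (Finset α)}

lemma supClosure_subset (h : stepRel Δ Δ') :
    supClosure (Δ' : Set (Finset α)) ⊆ supClosure ↑Δ := by
  obtain ⟨V, rfl | ⟨-, rfl⟩⟩ := h
  · exact supClosure_mono (Finset.coe_subset.mpr (Finset.filter_subset _ _))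
  · exact supClosure_image_sup_product_subset (Finset.filter_subset _ _)

lemma notMem_supClosure {rem : Finset α} (h : stepRel Δ Δ') (h1 : rem ∈ Δ) (h2 : rem ∉ Δ') :
    rem ∉ supClosure (Δ' : Set (Finset α)) := by
  obtain ⟨V, rfl | ⟨-, rfl⟩⟩ := h
  · have hviol : ∃ x ∈ rem, V x = true := by
      by_contra hx
      exact h2 (Finset.mem_filter.mpr ⟨h1, hx⟩)
    intro hrem
    refine supClosure_min (fun s hs => ?_) (supClosed_setOf_not_violated V) hrem hviol
    exact (Finset.mem_filter.mp hs).2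
  · intro hrem
    obtain ⟨s, hs, hle⟩ := exists_le_of_mem_supClosure hrem
    exact not_le_of_mem_image_sup_product h1 h2 hs hle

end stepRel

/-- In the join-based candidate elimination, once a conjunction
`rem` is removed from `Δ` it never reappears under any subsequent sequence of
positive-removal or join updates. -/
theorem removed_conjunction_never_reappears
    {α : Type} [DecidableEq α]
    (Δseq : ℕ → Finset (Finset α))
    (hstep : ∀ i : ℕ, stepRel (Δseq i) (Δseq (i + 1)))
    (rem : Finset α) (t : ℕ)
    (h1 : rem ∈ Δseq t) (h2 : rem ∉ Δseq (t + 1)) :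
    ∀ u : ℕ, t < u → rem ∉ Δseq u := by
  have hclosure : ∀ u, t + 1 ≤ u → rem ∉ supClosure (Δseq u : Set (Finset α)) := by
    intro u hu
    induction u, hu using Nat.le_induction with
    | base => exact (hstep t).notMem_supClosure h1 h2
    | succ n _ ih => exact fun hrem => ih ((hstep n).supClosure_subset hrem)
  exact fun u hu hrem => hclosure u hu (subset_supClosure hrem)
end
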